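/- Let G be a graph with n vertices and e edges such that the edge chromatic number χ'(G) is at most ℓ, and let H be the edgeless graph on ℓ vertices. Then the join G * H admits a clique partition of size exactly nℓ − e. -/

import Mathlib

/-- The join of a graph `G` on `Fin n` with the edgeless graph on `Fin ℓ`. -/
def joinEdgeless {n ℓ : ℕ} (G : SimpleGraph (Fin n)) : SimpleGraph (Fin n ⊕ Fin ℓ) where
  Adj u v :=
    match u, v with
    | Sum.inl a, Sum.inl b => G.Adj a b
    | Sum.inl _, Sum.inr _ => True
    | Sum.inr _, Sum.inl _ => True
    | Sum.inr _, Sum.inr _ => False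
  symm := ⟨by
    rintro (a | a) (b | b) h <;> simp_all <;> exact h.symm⟩
  loopless := ⟨by
    rintro (a | a) h <;> simp_all⟩

/-- `P` is a clique partition of `G`. -/
def IsCliquePartition {V : Type*} (G : SimpleGraph V) (P : Finset (Finset V)) : Prop :=
  (∀ s ∈ P, G.IsClique (s : Set V) ∧ 2 ≤ s.card) ∧
    ∀ u v : V, G.Adj u v → ∃! s, s ∈ P ∧ u ∈ s ∧ v ∈ s

/-- `G` has a proper edge coloring with `ℓ` colors, i.e. `χ'(G) ≤ ℓ`. -/
def HasProperEdgeColoring {n : ℕ} (G : SimpleGraph (Fin n)) (ℓ : ℕ) : Prop :=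
  ∃ c : Sym2 (Fin n) → Fin ℓ,
    ∀ e₁ ∈ G.edgeSet, ∀ e₂ ∈ G.edgeSet,
      e₁ ≠ e₂ → (∃ v, v ∈ e₁ ∧ v ∈ e₂) → c e₁ ≠ c e₂

/-!
Fix a proper edge colouring `c` of `G` with the `ℓ` vertices of the edgeless side as colours.
Each edge `xy` of `G` together with its colour `c(xy)` spans a triangle of the join; these
triangles cover every edge of `G` once and, by properness, each cross edge `{x, v}` at most once.
The cross edges `{x, v}` with no edge at `x` coloured `v` are added as single-edge cliques.
The covered cross edges correspond to the darts `(x, y)` of `G` via `(x, y) ↦ (x, c(xy))`, so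
there are `2e` of them, and the partition has `e + (nℓ - 2e) = nℓ - e` cliques.
-/

open Finset Sum

variable {V α : Type*}

def SimpleGraph.IsProperEdgeColoring (G : SimpleGraph V) (c : Sym2 V → α) : Prop :=
  ∀ e₁ ∈ G.edgeSet, ∀ e₂ ∈ G.edgeSet, e₁ ≠ e₂ → (∃ v, v ∈ e₁ ∧ v ∈ e₂) → c e₁ ≠ c e₂

namespace SimpleGraph.IsProperEdgeColoring

variable {G : SimpleGraph V} {c : Sym2 V → α}

theorem eq_of_mem_of_eq (hc : G.IsProperEdgeColoring c) {e₁ e₂ : Sym2 V} (h₁ : e₁ ∈ G.edgeSet)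
    (h₂ : e₂ ∈ G.edgeSet) {a : V} (ha₁ : a ∈ e₁) (ha₂ : a ∈ e₂) (h : c e₁ = c e₂) : e₁ = e₂ :=
  by_contra fun hne => hc _ h₁ _ h₂ hne ⟨a, ha₁, ha₂⟩ h

theorem injective_dart (hc : G.IsProperEdgeColoring c) :
    Function.Injective fun d : G.Dart => (d.fst, c d.edge) := by
  intro d₁ d₂ h
  obtain ⟨hfst, hcol⟩ := Prod.mk.inj h
  have hedge : d₁.edge = d₂.edge :=
    hc.eq_of_mem_of_eq d₁.edge_mem d₂.edge_mem (Sym2.mem_mk_left _ _)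
      (hfst ▸ Sym2.mem_mk_left _ _) hcol
  rcases (dart_edge_eq_iff d₁ d₂).1 hedge with h | rfl
  · exact h
  · exact absurd hfst d₂.snd_ne_fst

end SimpleGraph.IsProperEdgeColoring

open SimpleGraph

theorem SimpleGraph.isClique_toFinset_of_mem_edgeSet [DecidableEq V] {G : SimpleGraph V}
    {e : Sym2 V} (he : e ∈ G.edgeSet) : G.IsClique (e.toFinset : Set V) := by
  induction e using Sym2.ind with
  | _ x y =>
    rw [Sym2.toFinset_mk_eq, coe_pair]
    exact isClique_pair.2 fun _ => he

section

def crossEdge (p : V × α) : Finset (V ⊕ α) :=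
  ({p.1} : Finset V).disjSum {p.2}

@[simp]
theorem inl_mem_crossEdge {a : V} {p : V × α} : inl a ∈ crossEdge p ↔ a = p.1 := by
  simp [crossEdge]

@[simp]
theorem inr_mem_crossEdge {v : α} {p : V × α} : inr v ∈ crossEdge p ↔ v = p.2 := by
  simp [crossEdge]

theorem card_crossEdge (p : V × α) : #(crossEdge p) = 2 := by
  simp [crossEdge, card_disjSum]

theorem crossEdge_injective : Function.Injective (crossEdge : V × α → Finset (V ⊕ α)) := by
  intro p q h
  have h₁ : inl p.1 ∈ crossEdge q := h ▸ inl_mem_crossEdge.2 rfl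
  have h₂ : inr p.2 ∈ crossEdge q := h ▸ inr_mem_crossEdge.2 rfl
  exact Prod.ext (inl_mem_crossEdge.1 h₁) (inr_mem_crossEdge.1 h₂)

variable [DecidableEq V]

def edgeTriangle (c : Sym2 V → α) (e : Sym2 V) : Finset (V ⊕ α) :=
  e.toFinset.disjSum {c e}

variable {c : Sym2 V → α}

@[simp]
theorem inl_mem_edgeTriangle {a : V} {e : Sym2 V} : inl a ∈ edgeTriangle c e ↔ a ∈ e := by
  simp [edgeTriangle]

@[simp]
theorem inr_mem_edgeTriangle {v : α} {e : Sym2 V} : inr v ∈ edgeTriangle c e ↔ c e = v := by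
  simp [edgeTriangle, eq_comm]

theorem card_edgeTriangle {e : Sym2 V} (he : ¬e.IsDiag) : #(edgeTriangle c e) = 3 := by
  simp [edgeTriangle, card_disjSum, Sym2.card_toFinset_of_not_isDiag e he]

theorem edgeTriangle_injective : Function.Injective (edgeTriangle c) := fun e₁ e₂ h =>
  Sym2.ext fun a => by rw [← inl_mem_edgeTriangle (c := c), h, inl_mem_edgeTriangle]

end

section

variable [DecidableEq V] [DecidableEq α] [Fintype V] (G : SimpleGraph V) [DecidableRel G.Adj]
  (c : Sym2 V → α)

def coloredDarts : Finset (V × α) :=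
  univ.image fun d : G.Dart => (d.fst, c d.edge)

variable {G c}

theorem mem_coloredDarts {a : V} {v : α} :
    (a, v) ∈ coloredDarts G c ↔ ∃ e ∈ G.edgeSet, a ∈ e ∧ c e = v := by
  constructor
  · intro h
    obtain ⟨d, -, h⟩ := mem_image.1 h
    obtain ⟨rfl, rfl⟩ := Prod.mk.inj h
    exact ⟨d.edge, d.edge_mem, Sym2.mem_mk_left _ _, rfl⟩
  · rintro ⟨e, he, ha, rfl⟩
    induction e using Sym2.ind with
    | _ x y =>
      rcases Sym2.mem_iff.1 ha with rfl | rfl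
      · exact mem_image.2 ⟨⟨(a, y), he⟩, mem_univ _, rfl⟩
      · refine mem_image.2 ⟨⟨(a, x), (G.mem_edgeSet.1 he).symm⟩, mem_univ _, ?_⟩
        simp [Dart.edge, Sym2.eq_swap]

theorem card_coloredDarts (hc : G.IsProperEdgeColoring c) :
    #(coloredDarts G c) = 2 * #G.edgeFinset := by
  rw [coloredDarts, card_image_of_injective _ hc.injective_dart, card_univ,
    dart_card_eq_twice_card_edges]

variable (G c) [Fintype α]

def joinPartition : Finset (Finset (V ⊕ α)) :=
  G.edgeFinset.image (edgeTriangle c) ∪ (coloredDarts G c)ᶜ.image crossEdge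

variable {G c}

theorem mem_joinPartition {s : Finset (V ⊕ α)} :
    s ∈ joinPartition G c ↔
      (∃ e ∈ G.edgeSet, edgeTriangle c e = s) ∨ ∃ p ∉ coloredDarts G c, crossEdge p = s := by
  simp [joinPartition]

theorem card_joinPartition (hc : G.IsProperEdgeColoring c) :
    #(joinPartition G c) + #G.edgeFinset = Fintype.card V * Fintype.card α := by
  have hdisj :
      Disjoint (G.edgeFinset.image (edgeTriangle c)) ((coloredDarts G c)ᶜ.image crossEdge) := by
    refine disjoint_left.2 fun s hT hS => ?_
    obtain ⟨e, he, rfl⟩ := mem_image.1 hT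
    obtain ⟨p, -, hp⟩ := mem_image.1 hS
    have := card_crossEdge p
    rw [hp, card_edgeTriangle (G.not_isDiag_of_mem_edgeSet (mem_edgeFinset.1 he))] at this
    omega
  have hle := card_le_univ (coloredDarts G c)
  rw [card_coloredDarts hc, Fintype.card_prod] at hle
  rw [joinPartition, card_union_of_disjoint hdisj,
    card_image_of_injective _ edgeTriangle_injective, card_image_of_injective _ crossEdge_injective,
    card_compl, card_coloredDarts hc, Fintype.card_prod]
  omega

theorem existsUnique_inl_inl_mem_joinPartition {a b : V} (hab : G.Adj a b) :
    ∃! s, s ∈ joinPartition G c ∧ inl a ∈ s ∧ inl b ∈ s := by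
  refine ⟨edgeTriangle c s(a, b),
    ⟨mem_joinPartition.2 (.inl ⟨_, hab, rfl⟩), by simp, by simp⟩, ?_⟩
  rintro s ⟨hs, ha, hb⟩
  rcases mem_joinPartition.1 hs with ⟨e, -, rfl⟩ | ⟨p, -, rfl⟩
  · rw [inl_mem_edgeTriangle] at ha hb
    rw [(Sym2.mem_and_mem_iff hab.ne).1 ⟨ha, hb⟩]
  · rw [inl_mem_crossEdge] at ha hb
    exact absurd (ha.trans hb.symm) hab.ne

theorem existsUnique_inl_inr_mem_joinPartition (hc : G.IsProperEdgeColoring c)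
    (a : V) (v : α) :
    ∃! s, s ∈ joinPartition G c ∧ inl a ∈ s ∧ inr v ∈ s := by
  by_cases hav : (a, v) ∈ coloredDarts G c
  · obtain ⟨e, he, hae, rfl⟩ := mem_coloredDarts.1 hav
    refine ⟨edgeTriangle c e, ⟨mem_joinPartition.2 (.inl ⟨e, he, rfl⟩), by simpa, by simp⟩, ?_⟩
    rintro s ⟨hs, ha, hv⟩
    rcases mem_joinPartition.1 hs with ⟨e', he', rfl⟩ | ⟨p, hp, rfl⟩
    · simp only [inl_mem_edgeTriangle, inr_mem_edgeTriangle] at ha hv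
      rw [hc.eq_of_mem_of_eq he' he ha hae hv]
    · simp only [inl_mem_crossEdge, inr_mem_crossEdge] at ha hv
      rw [ha, hv] at hav
      exact absurd hav hp
  · refine ⟨crossEdge (a, v), ⟨mem_joinPartition.2 (.inr ⟨_, hav, rfl⟩), by simp, by simp⟩, ?_⟩
    rintro s ⟨hs, ha, hv⟩
    rcases mem_joinPartition.1 hs with ⟨e, he, rfl⟩ | ⟨p, -, rfl⟩
    · simp only [inl_mem_edgeTriangle, inr_mem_edgeTriangle] at ha hv
      exact absurd (mem_coloredDarts.2 ⟨e, he, ha, hv⟩) hav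
    · simp only [inl_mem_crossEdge, inr_mem_crossEdge] at ha hv
      subst ha hv
      rfl

end

section Join

variable {n ℓ : ℕ} {G : SimpleGraph (Fin n)}

theorem isClique_joinEdgeless_disjSum_singleton {s : Finset (Fin n)}
    (hs : G.IsClique (s : Set (Fin n))) (v : Fin ℓ) :
    (joinEdgeless G).IsClique ((s.disjSum {v} : Finset _) : Set (Fin n ⊕ Fin ℓ)) := by
  rintro (a | w) hx (b | w') hy hne
  · exact hs (by simpa using hx) (by simpa using hy) (by simpa using hne)
  · trivial
  · trivial
  · rw [mem_coe, inr_mem_disjSum, mem_singleton] at hx hy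
    exact hne (by rw [hx, hy])

theorem isCliquePartition_joinPartition [DecidableRel G.Adj] {c : Sym2 (Fin n) → Fin ℓ}
    (hc : G.IsProperEdgeColoring c) : IsCliquePartition (joinEdgeless G) (joinPartition G c) := by
  refine ⟨fun s hs => ?_, ?_⟩
  · rcases mem_joinPartition.1 hs with ⟨e, he, rfl⟩ | ⟨p, -, rfl⟩
    · have hcard := card_edgeTriangle (c := c) (G.not_isDiag_of_mem_edgeSet he)
      exact ⟨isClique_joinEdgeless_disjSum_singleton (isClique_toFinset_of_mem_edgeSet he) _,
        by omega⟩
    · exact ⟨isClique_joinEdgeless_disjSum_singleton (by simp) _, (card_crossEdge p).ge⟩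
  · rintro (a | v) (b | w) hadj
    · exact existsUnique_inl_inl_mem_joinPartition hadj
    · exact existsUnique_inl_inr_mem_joinPartition hc a w
    · exact (existsUnique_congr fun s => and_congr_right' and_comm).1
        (existsUnique_inl_inr_mem_joinPartition hc b v)
    · exact hadj.elim

end Join

theorem cliquePartition_join_of_edgeColoring_general (n ℓ : ℕ)
    (G : SimpleGraph (Fin n)) [DecidableRel G.Adj]
    (hχ : HasProperEdgeColoring G ℓ) :
    ∃ P : Finset (Finset (Fin n ⊕ Fin ℓ)),
      IsCliquePartition (joinEdgeless (ℓ := ℓ) G) P ∧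
        P.card + G.edgeFinset.card = n * ℓ := by
  obtain ⟨c, hc⟩ := hχ
  refine ⟨joinPartition G c, isCliquePartition_joinPartition hc, ?_⟩
  simpa using card_joinPartition hc

/-- if `χ'(G) ≤ ℓ`, then the join `G * \overline{K_ℓ}` admits a clique
partition of size exactly `nℓ − e`. -/
theorem cliquePartition_join_of_edgeColoring (n ℓ : ℕ) (hℓ : 0 < ℓ)
    (G : SimpleGraph (Fin n)) [DecidableRel G.Adj]
    (hχ : HasProperEdgeColoring G ℓ) :
    ∃ P : Finset (Finset (Fin n ⊕ Fin ℓ)),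
      IsCliquePartition (joinEdgeless (ℓ := ℓ) G) P ∧
        P.card + G.edgeFinset.card = n * ℓ :=
  cliquePartition_join_of_edgeColoring_general n ℓ G hχ
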